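/- Let f be a smooth symmetric homogeneous-degree-one function on Γ₊ with strictly positive first derivatives. Setting τᵢ = 1/κᵢ and f_*(τ) = f(κ)⁻¹, the second derivatives of f and f_* are related by ∂²f/∂κₖ∂κₗ = −f_*⁻² · (∂²f_*/∂τₖ∂τₗ)·κₖ⁻²κₗ⁻² + 2 f⁻¹ (∂f/∂κₖ)(∂f/∂κₗ) − 2 (∂f/∂κₖ)/κₖ · δₖₗ. In particular, if f_* is concave then the matrix (∂²f/∂κₖ∂κₗ + 2(∂f/∂κₖ)/κₖ · δₖₗ) is positive semidefinite. -/

import Mathlib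

noncomputable section

/-- The positive cone Γ₊ = {x ∈ ℝⁿ : xᵢ > 0}. -/
def PosCone (n : ℕ) : Set (Fin n → ℝ) := {x | ∀ i, 0 < x i}

/-- The dual function f_*(τ) = f(τ₁⁻¹,…,τₙ⁻¹)⁻¹. -/
def dualFn {n : ℕ} (f : (Fin n → ℝ) → ℝ) : (Fin n → ℝ) → ℝ :=
  fun τ => (f fun i => (τ i)⁻¹)⁻¹

/-- First partial derivative ∂f/∂xᵢ. -/
def pd {n : ℕ} (f : (Fin n → ℝ) → ℝ) (x : Fin n → ℝ) (i : Fin n) : ℝ :=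
  fderiv ℝ f x (Pi.single i 1)

/-- Second partial derivative ∂²f/∂xᵢ∂xⱼ. -/
def pd2 {n : ℕ} (f : (Fin n → ℝ) → ℝ) (x : Fin n → ℝ) (i j : Fin n) : ℝ :=
  fderiv ℝ (fun y => fderiv ℝ f y (Pi.single j 1)) x (Pi.single i 1)

open Set Filter Topology ContinuousLinearMap

namespace SDD

variable {n : ℕ}

lemma isOpen_posCone (n : ℕ) : IsOpen (PosCone n) := by
  have h : PosCone n = ⋂ i, {x : Fin n → ℝ | 0 < x i} := by ext x; simp [PosCone]
  rw [h]
  exact isOpen_iInter_of_finite fun i => isOpen_lt continuous_const (continuous_apply i)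

lemma convex_posCone (n : ℕ) : Convex ℝ (PosCone n) := by
  have h : PosCone n = ⋂ i, (LinearMap.proj (R := ℝ) (φ := fun _ : Fin n => ℝ) i) ⁻¹' (Ioi 0) := by
    ext x; simp [PosCone]
  rw [h]
  exact convex_iInter fun i => (convex_Ioi (0:ℝ)).linear_preimage _

def invMap (n : ℕ) : (Fin n → ℝ) → (Fin n → ℝ) := fun τ i => (τ i)⁻¹

lemma invMap_mem {τ : Fin n → ℝ} (h : τ ∈ PosCone n) : invMap n τ ∈ PosCone n :=
  fun i => inv_pos.2 (h i)

lemma invMap_invMap (κ : Fin n → ℝ) : invMap n (invMap n κ) = κ := by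
  funext i; simp [invMap]

/-- derivative of coordinatewise inversion -/
def DD (τ : Fin n → ℝ) : (Fin n → ℝ) →L[ℝ] (Fin n → ℝ) :=
  ContinuousLinearMap.pi fun i => (-(τ i ^ 2)⁻¹) • ContinuousLinearMap.proj (R := ℝ) (φ := fun _ : Fin n => ℝ) i

abbrev projR (n : ℕ) (i : Fin n) : (Fin n → ℝ) →L[ℝ] ℝ :=
  ContinuousLinearMap.proj (R := ℝ) (φ := fun _ : Fin n => ℝ) i

lemma hasFDerivAt_invMap {τ : Fin n → ℝ} (hτ : ∀ i, τ i ≠ 0) :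
    HasFDerivAt (invMap n) (DD τ) τ := by
  apply hasFDerivAt_pi''
  intro i
  have h1 : HasFDerivAt (fun σ : Fin n → ℝ => (σ i)⁻¹)
      ((-(τ i ^ 2)⁻¹) • projR n i) τ :=
    (hasDerivAt_inv (hτ i)).comp_hasFDerivAt τ (projR n i).hasFDerivAt
  exact h1

lemma DD_single (τ : Fin n → ℝ) (l : Fin n) :
    DD τ (Pi.single l 1) = (-(τ l ^ 2)⁻¹) • (Pi.single l 1 : Fin n → ℝ) := by
  funext i
  rcases eq_or_ne i l with rfl | h
  · simp [DD]
  · simp [DD, Pi.single_apply, h, Ne.symm h]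

lemma contDiffOn_invMap (n : ℕ) : ContDiffOn ℝ (⊤ : ℕ∞) (invMap n) (PosCone n) := by
  apply contDiffOn_pi.2
  intro i
  exact ((ContinuousLinearMap.proj (R := ℝ) (φ := fun _ : Fin n => ℝ) i).contDiff.contDiffOn).inv
    fun x hx => (hx i).ne'

section
variable {f : (Fin n → ℝ) → ℝ}
variable (hsmooth : ContDiffOn ℝ (⊤ : ℕ∞) f (PosCone n)) (hpos : ∀ x ∈ PosCone n, 0 < f x)

include hsmooth in
lemma hasFDerivAt_comp_inv {τ : Fin n → ℝ} (hτ : τ ∈ PosCone n) :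
    HasFDerivAt (fun σ => f (invMap n σ)) ((fderiv ℝ f (invMap n τ)).comp (DD τ)) τ := by
  have hκ := invMap_mem hτ
  have hd : DifferentiableAt ℝ f (invMap n τ) :=
    (hsmooth.contDiffAt ((isOpen_posCone n).mem_nhds hκ)).differentiableAt (by simp)
  exact hd.hasFDerivAt.comp τ (hasFDerivAt_invMap fun i => (hτ i).ne')

include hsmooth hpos in
lemma hasFDerivAt_dual {τ : Fin n → ℝ} (hτ : τ ∈ PosCone n) :
    HasFDerivAt (dualFn f)
      ((-(f (invMap n τ) ^ 2)⁻¹) • ((fderiv ℝ f (invMap n τ)).comp (DD τ))) τ :=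
  (hasDerivAt_inv (hpos _ (invMap_mem hτ)).ne').comp_hasFDerivAt τ
    (hasFDerivAt_comp_inv hsmooth hτ)

include hsmooth hpos in
set_option maxHeartbeats 1000000 in
lemma pd2_dual {τ : Fin n → ℝ} (hτ : τ ∈ PosCone n) (k l : Fin n) :
    pd2 (dualFn f) τ k l =
      2 * (f (invMap n τ) ^ 3)⁻¹ * (τ k ^ 2)⁻¹ * (τ l ^ 2)⁻¹
          * pd f (invMap n τ) k * pd f (invMap n τ) l
        - (f (invMap n τ) ^ 2)⁻¹ * (τ k ^ 2)⁻¹ * (τ l ^ 2)⁻¹ * pd2 f (invMap n τ) k l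
        - 2 * (f (invMap n τ) ^ 2)⁻¹ * (τ l ^ 3)⁻¹ * pd f (invMap n τ) l
          * (if k = l then 1 else 0) := by
  classical
  have hopen := isOpen_posCone n
  have hκ : invMap n τ ∈ PosCone n := invMap_mem hτ
  have hfne : f (invMap n τ) ≠ 0 := (hpos _ hκ).ne'
  have hτne : ∀ i, τ i ≠ 0 := fun i => (hτ i).ne'
  set φ : (Fin n → ℝ) → ℝ :=
    fun σ => (f (invMap n σ) ^ 2)⁻¹ * ((σ l ^ 2)⁻¹ * fderiv ℝ f (invMap n σ) (Pi.single l 1))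
    with hφdef
  have hev : (fun σ => fderiv ℝ (dualFn f) σ (Pi.single l 1)) =ᶠ[𝓝 τ] φ := by
    filter_upwards [hopen.mem_nhds hτ] with σ hσ
    rw [(hasFDerivAt_dual hsmooth hpos hσ).fderiv, ContinuousLinearMap.smul_apply,
      ContinuousLinearMap.comp_apply, DD_single, map_smul]
    simp only [hφdef, smul_eq_mul]
    ring
  have hstep : pd2 (dualFn f) τ k l = fderiv ℝ φ τ (Pi.single k 1) := by
    rw [pd2, hev.fderiv_eq]
  have hcomp : HasFDerivAt (fun σ => f (invMap n σ)) ((fderiv ℝ f (invMap n τ)).comp (DD τ)) τ :=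
    hasFDerivAt_comp_inv hsmooth hτ
  have hA := (((show HasDerivAt (fun x : ℝ => (x ^ 2)⁻¹) _ _ from (hasDerivAt_pow 2 (f (invMap n τ))).inv
    (pow_ne_zero 2 hfne)).comp_hasFDerivAt τ hcomp :) :
    HasFDerivAt (fun σ => (f (invMap n σ) ^ 2)⁻¹) _ τ)
  have hB := (((show HasDerivAt (fun x : ℝ => (x ^ 2)⁻¹) _ _ from (hasDerivAt_pow 2 (τ l)).inv
    (pow_ne_zero 2 (hτne l))).comp_hasFDerivAt τ (projR n l).hasFDerivAt :) :
    HasFDerivAt (fun σ : Fin n → ℝ => (σ l ^ 2)⁻¹) _ τ)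
  have hMdiff : DifferentiableAt ℝ (fun y => fderiv ℝ f y (Pi.single l 1)) (invMap n τ) := by
    have h2 : ContDiffAt ℝ 2 f (invMap n τ) :=
      (hsmooth.contDiffAt (hopen.mem_nhds hκ)).of_le (by exact WithTop.coe_le_coe.2 (le_top : (2 : ℕ∞) ≤ ⊤))
    have h1 : ContDiffAt ℝ 1 (fderiv ℝ f) (invMap n τ) := h2.fderiv_right le_rfl
    exact (h1.differentiableAt one_ne_zero).clm_apply (differentiableAt_const _)
  have hC : HasFDerivAt (fun σ => fderiv ℝ f (invMap n σ) (Pi.single l 1))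
      ((fderiv ℝ (fun y => fderiv ℝ f y (Pi.single l 1)) (invMap n τ)).comp (DD τ)) τ :=
    hMdiff.hasFDerivAt.comp τ (hasFDerivAt_invMap hτne)
  have hφ' := hA.mul (hB.mul hC)
  have hfd : fderiv ℝ φ τ = _ := hφ'.fderiv
  rw [hstep, hfd]
  simp only [ContinuousLinearMap.add_apply, ContinuousLinearMap.smul_apply,
    ContinuousLinearMap.comp_apply, DD_single, map_smul, smul_eq_mul,
    ContinuousLinearMap.proj_apply, Pi.single_apply, projR]
  clear hφ' hfd hA hB hC hMdiff hcomp hev hstep hφdef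
  simp only [Function.comp, pd, pd2, Pi.mul_apply, ContinuousLinearMap.proj_apply]
  push_cast
  rcases eq_or_ne k l with rfl | hkl
  · simp only [if_pos rfl, ↓reduceIte]
    set P := (fderiv ℝ (fun y => (fderiv ℝ f y) (Pi.single k (1:ℝ))) (invMap n τ)) (Pi.single k (1:ℝ)) with hP
    set X := (fderiv ℝ f (invMap n τ)) (Pi.single k (1:ℝ)) with hX
    set a := f (invMap n τ) with ha
    set b := τ k with hb
    have hbne : b ≠ 0 := hτne k
    field_simp [hfne, hbne]
    ring
  · simp only [if_neg hkl, if_neg (Ne.symm hkl)]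
    set P := (fderiv ℝ (fun y => (fderiv ℝ f y) (Pi.single l (1:ℝ))) (invMap n τ)) (Pi.single k (1:ℝ)) with hP
    set X := (fderiv ℝ f (invMap n τ)) (Pi.single k (1:ℝ)) with hX
    set Y := (fderiv ℝ f (invMap n τ)) (Pi.single l (1:ℝ)) with hY
    set a := f (invMap n τ) with ha
    set b := τ k with hb
    set c := τ l with hc
    have hbne : b ≠ 0 := hτne k
    have hcne : c ≠ 0 := hτne l
    field_simp [hfne, hbne, hcne]
    ring

end

lemma hessian_nonpos {g : (Fin n → ℝ) → ℝ} (hg : ContDiffOn ℝ (⊤ : ℕ∞) g (PosCone n))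
    (hconc : ConcaveOn ℝ (PosCone n) g) {τ : Fin n → ℝ} (hτ : τ ∈ PosCone n)
    (w : Fin n → ℝ) :
    ∑ k, ∑ l, pd2 g τ k l * w k * w l ≤ 0 := by
  classical
  have hopen := isOpen_posCone n
  set s : Set ℝ := {t : ℝ | τ + t • w ∈ PosCone n} with hsdef
  have hs_open : IsOpen s :=
    hopen.preimage (continuous_const.add (continuous_id.smul continuous_const))
  have h0s : (0:ℝ) ∈ s := by simp [hsdef]; simpa using hτ
  have hs_conv : Convex ℝ s := by
    intro x hx y hy a b ha hb hab
    have hrw : τ + (a • x + b • y) • w = a • (τ + x • w) + b • (τ + y • w) := by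
      have h2 : a • (τ + x • w) + b • (τ + y • w) = (a + b) • τ + (a • x + b • y) • w := by
        simp only [smul_eq_mul]
        module
      rw [h2, hab, one_smul]
    show τ + (a • x + b • y) • w ∈ PosCone n
    rw [hrw]
    exact convex_posCone n hx hy ha hb hab
  have hgdiff : ∀ y ∈ PosCone n, DifferentiableAt ℝ g y := fun y hy =>
    (hg.contDiffAt (hopen.mem_nhds hy)).differentiableAt (by simp)
  have haff : ∀ t : ℝ, HasDerivAt (fun t : ℝ => τ + t • w) w t := fun t => by
    simpa using ((hasDerivAt_id t).smul_const w).const_add τ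
  set ψ : ℝ → ℝ := fun t => fderiv ℝ g (τ + t • w) w with hψdef
  have hφ' : ∀ t ∈ s, HasDerivAt (fun t => g (τ + t • w)) (ψ t) t := fun t ht =>
    (hgdiff _ ht).hasFDerivAt.comp_hasDerivAt t (haff t)
  have hφconc : ConcaveOn ℝ s (fun t => g (τ + t • w)) := by
    refine ⟨hs_conv, fun x hx y hy a b ha hb hab => ?_⟩
    have hrw : τ + (a • x + b • y) • w = a • (τ + x • w) + b • (τ + y • w) := by
      have h2 : a • (τ + x • w) + b • (τ + y • w) = (a + b) • τ + (a • x + b • y) • w := by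
        simp only [smul_eq_mul]
        module
      rw [h2, hab, one_smul]
    show a • (g (τ + x • w)) + b • (g (τ + y • w)) ≤ g (τ + (a • x + b • y) • w)
    rw [hrw]
    exact hconc.2 hx hy ha hb hab
  -- ψ is antitone on s
  have hFconv : ConvexOn ℝ s (fun t => -(g (τ + t • w))) := hφconc.neg
  have hFd : ∀ t ∈ s, HasDerivAt (fun t => -(g (τ + t • w))) (-(ψ t)) t := fun t ht =>
    (hφ' t ht).neg
  have hmono := hFconv.monotoneOn_deriv (fun t ht => (hFd t ht).differentiableAt)
  have hanti : ∀ t ∈ s, 0 ≤ t → ψ t ≤ ψ 0 := by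
    intro t ht ht0
    have := hmono h0s ht ht0
    rw [(hFd 0 h0s).deriv, (hFd t ht).deriv] at this
    linarith
  -- ψ has derivative Q at 0
  have h2 : ContDiffAt ℝ 2 g τ := (hg.contDiffAt (hopen.mem_nhds hτ)).of_le (by exact WithTop.coe_le_coe.2 (le_top : (2 : ℕ∞) ≤ ⊤))
  have h1 : DifferentiableAt ℝ (fderiv ℝ g) τ := (h2.fderiv_right (m := 1) le_rfl).differentiableAt one_ne_zero
  have hGapp : ∀ u v : Fin n → ℝ,
      fderiv ℝ (fun y => fderiv ℝ g y u) τ v = (fderiv ℝ (fderiv ℝ g) τ v) u := by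
    intro u v
    rw [fderiv_clm_apply h1 (differentiableAt_const u)]
    simp
  have hNd : DifferentiableAt ℝ (fun y => fderiv ℝ g y w) τ :=
    h1.clm_apply (differentiableAt_const _)
  have hψd : HasDerivAt ψ (fderiv ℝ (fun y => fderiv ℝ g y w) τ w) 0 := by
    have h00 : τ + (0:ℝ) • w = τ := by simp
    have hNd' : DifferentiableAt ℝ (fun y => fderiv ℝ g y w) (τ + (0:ℝ) • w) := by
      rw [h00]; exact hNd
    have := hNd'.hasFDerivAt.comp_hasDerivAt 0 (haff 0)
    rw [h00] at this
    exact this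
  -- derivative of antitone function at interior point is ≤ 0
  have hQ : fderiv ℝ (fun y => fderiv ℝ g y w) τ w ≤ 0 := by
    have htend := hψd.hasDerivWithinAt (s := Ioi (0:ℝ))
    rw [hasDerivWithinAt_iff_tendsto_slope] at htend
    have hdiff : Ioi (0:ℝ) \ {0} = Ioi (0:ℝ) := Set.diff_singleton_eq_self (by simp)
    rw [hdiff] at htend
    refine le_of_tendsto htend ?_
    filter_upwards [mem_nhdsWithin_of_mem_nhds (hs_open.mem_nhds h0s),
      self_mem_nhdsWithin] with t hts (ht0 : t ∈ Ioi (0:ℝ))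
    rw [slope_def_field]
    apply div_nonpos_of_nonpos_of_nonneg
    · have := hanti t hts (le_of_lt ht0)
      linarith
    · simp only [sub_zero]; exact (le_of_lt ht0)
  -- identify Q with the quadratic form
  have hwsum : w = ∑ k, w k • (Pi.single k (1:ℝ) : Fin n → ℝ) := by
    funext j
    rw [Finset.sum_apply]
    simp [Pi.single_apply]
  have hform : ∑ k, ∑ l, pd2 g τ k l * w k * w l
      = fderiv ℝ (fun y => fderiv ℝ g y w) τ w := by
    rw [hGapp w w]
    have hexp : (fderiv ℝ (fderiv ℝ g) τ w) w
        = ∑ k, ∑ l, (fderiv ℝ (fderiv ℝ g) τ (Pi.single l 1)) (Pi.single k 1) * w k * w l := by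
      conv_lhs => rw [hwsum]
      simp only [map_sum, map_smul, ContinuousLinearMap.sum_apply,
        ContinuousLinearMap.smul_apply, smul_eq_mul, Finset.mul_sum]
      refine Finset.sum_congr rfl fun k _ => Finset.sum_congr rfl fun l _ => ?_
      ring
    rw [hexp, Finset.sum_comm]
    refine Finset.sum_congr rfl fun k _ => Finset.sum_congr rfl fun l _ => ?_
    rw [pd2, hGapp]
    ring
  rw [hform]
  exact hQ

lemma contDiffOn_dual {f : (Fin n → ℝ) → ℝ} (hsmooth : ContDiffOn ℝ (⊤ : ℕ∞) f (PosCone n))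
    (hpos : ∀ x ∈ PosCone n, 0 < f x) : ContDiffOn ℝ (⊤ : ℕ∞) (dualFn f) (PosCone n) := by
  have h1 : ContDiffOn ℝ (⊤ : ℕ∞) (fun σ => f (invMap n σ)) (PosCone n) :=
    hsmooth.comp (contDiffOn_invMap n) (fun σ hσ => invMap_mem hσ)
  exact h1.inv fun σ hσ => (hpos _ (invMap_mem hσ)).ne'

lemma dualFn_invMap (f : (Fin n → ℝ) → ℝ) (κ : Fin n → ℝ) :
    dualFn f (invMap n κ) = (f κ)⁻¹ := by
  simp [dualFn, invMap]

end SDD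

open SDD in
/-- The relation between the second derivatives of f and of its dual f_* (with
τᵢ = κᵢ⁻¹), and the consequent positive semidefiniteness of
(f̈^{kl} + 2 ḟᵏ/κₖ δₖₗ) when f_* is concave. -/
theorem second_derivative_dual_relation
    {n : ℕ} (f : (Fin n → ℝ) → ℝ)
    (hsmooth : ContDiffOn ℝ (⊤ : ℕ∞) f (PosCone n))
    (hsymm : ∀ σ : Equiv.Perm (Fin n), ∀ x, f (x ∘ σ) = f x)
    (hhomog : ∀ k : ℝ, 0 < k → ∀ x, f (k • x) = k * f x)
    (hpos : ∀ x ∈ PosCone n, 0 < f x)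
    (hmono : ∀ x ∈ PosCone n, ∀ i, 0 < pd f x i) :
    (∀ κ ∈ PosCone n, ∀ k l,
      pd2 f κ k l =
        -((dualFn f (fun i => (κ i)⁻¹)) ^ 2)⁻¹ *
            pd2 (dualFn f) (fun i => (κ i)⁻¹) k l * ((κ k) ^ 2)⁻¹ * ((κ l) ^ 2)⁻¹
          + 2 * (f κ)⁻¹ * pd f κ k * pd f κ l
          - 2 * (pd f κ k / κ k) * (if k = l then 1 else 0)) ∧
    (ConcaveOn ℝ (PosCone n) (dualFn f) →
      ∀ κ ∈ PosCone n, ∀ v : Fin n → ℝ,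
        0 ≤ ∑ k, ∑ l,
          (pd2 f κ k l + 2 * (pd f κ k / κ k) * (if k = l then 1 else 0)) * v k * v l) := by
  classical
  have hmain : ∀ κ ∈ PosCone n, ∀ k l,
      pd2 f κ k l =
        -((dualFn f (fun i => (κ i)⁻¹)) ^ 2)⁻¹ *
            pd2 (dualFn f) (fun i => (κ i)⁻¹) k l * ((κ k) ^ 2)⁻¹ * ((κ l) ^ 2)⁻¹
          + 2 * (f κ)⁻¹ * pd f κ k * pd f κ l
          - 2 * (pd f κ k / κ k) * (if k = l then 1 else 0) := by
    intro κ hκ k l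
    have hτ : invMap n κ ∈ PosCone n := invMap_mem hκ
    have h2 := pd2_dual hsmooth hpos hτ k l
    rw [invMap_invMap] at h2
    have hfun : (fun i => (κ i)⁻¹) = invMap n κ := rfl
    rw [hfun, dualFn_invMap, h2]
    simp only [invMap]
    have hfne : f κ ≠ 0 := (hpos _ hκ).ne'
    have hbne : κ k ≠ 0 := (hκ k).ne'
    have hcne : κ l ≠ 0 := (hκ l).ne'
    set P := pd2 f κ k l with hP
    set X := pd f κ k with hX
    set Y := pd f κ l with hY
    set a := f κ with ha
    set b := κ k with hb
    set c := κ l with hc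
    rcases eq_or_ne k l with rfl | hkl
    · simp only [if_pos rfl]
      field_simp
      ring
    · simp only [if_neg hkl]
      field_simp
      ring
  refine ⟨hmain, ?_⟩
  intro hconc κ hκ v
  have hτ : invMap n κ ∈ PosCone n := invMap_mem hκ
  have hfκ : (0:ℝ) < f κ := hpos _ hκ
  set w : Fin n → ℝ := fun k => v k * ((κ k) ^ 2)⁻¹ with hw
  have hQ := hessian_nonpos (contDiffOn_dual hsmooth hpos) hconc hτ w
  have key : ∀ k l, (pd2 f κ k l + 2 * (pd f κ k / κ k) * (if k = l then 1 else 0)) * v k * v l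
      = (f κ) ^ 2 * (-(pd2 (dualFn f) (invMap n κ) k l * w k * w l))
        + 2 * (f κ)⁻¹ * ((pd f κ k * v k) * (pd f κ l * v l)) := by
    intro k l
    rw [hmain κ hκ k l]
    have hfun : (fun i => (κ i)⁻¹) = invMap n κ := rfl
    rw [hfun, dualFn_invMap]
    simp only [hw]
    have hfne : f κ ≠ 0 := hfκ.ne'
    have hbne : κ k ≠ 0 := (hκ k).ne'
    have hcne : κ l ≠ 0 := (hκ l).ne'
    set P := pd2 (dualFn f) (invMap n κ) k l with hP
    set X := pd f κ k with hX
    set Y := pd f κ l with hY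
    set a := f κ with ha
    set b := κ k with hb
    set c := κ l with hc
    rcases eq_or_ne k l with rfl | hkl
    · simp only [if_pos rfl]
      field_simp
      ring
    · simp only [if_neg hkl]
      field_simp
      ring
  have hsum : ∑ k, ∑ l,
      (pd2 f κ k l + 2 * (pd f κ k / κ k) * (if k = l then 1 else 0)) * v k * v l
      = (f κ) ^ 2 * (-(∑ k, ∑ l, pd2 (dualFn f) (invMap n κ) k l * w k * w l))
        + 2 * (f κ)⁻¹ * ((∑ k, pd f κ k * v k) * (∑ l, pd f κ l * v l)) := by
    rw [Finset.sum_mul_sum]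
    simp only [key, Finset.sum_add_distrib, ← Finset.mul_sum, ← Finset.sum_neg_distrib]
  rw [hsum]
  have h1 : 0 ≤ (f κ) ^ 2 * (-(∑ k, ∑ l, pd2 (dualFn f) (invMap n κ) k l * w k * w l)) :=
    mul_nonneg (sq_nonneg _) (neg_nonneg.2 hQ)
  have h2 : 0 ≤ 2 * (f κ)⁻¹ * ((∑ k, pd f κ k * v k) * (∑ l, pd f κ l * v l)) := by
    apply mul_nonneg
    · positivity
    · exact mul_self_nonneg _
  linarith
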